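/- Let p0 ∈ [1,∞) and let X̂_{p0} be the first generation space with τ_n = ⌊(n+1)^{p0}/n⌋ and F(n,i) = n. Then the non-centered maximal operator M is of strong type (p0,p0): ‖Mf‖_{p0}^{p0} ≤ (3 + 2^{p0+1}) ‖f‖_{p0}^{p0} for every f ∈ ℓ^{p0}(X_τ, μ). -/

import Mathlib

open scoped ENNReal Classical
open Filter Set

/-- The point set of a first generation space: roots `x_n` (`Sum.inl n`) and
leaves `x_{n,i}` (`Sum.inr ⟨n, i⟩`, `i` among `τ n` leaves of branch `n`). -/
abbrev XPt (τ : ℕ → ℕ) := ℕ ⊕ (Σ n : ℕ, Fin (τ n))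

namespace FirstGen

/-- The root `x_n`. -/
def root (τ : ℕ → ℕ) (n : ℕ) : XPt τ := Sum.inl n

/-- The leaf `x_{n,i}`. -/
def leaf (τ : ℕ → ℕ) (n : ℕ) (i : Fin (τ n)) : XPt τ := Sum.inr ⟨n, i⟩

/-- The branch `S_n = {x_n, x_{n,1}, …, x_{n,τ_n}}`. -/
def branch (τ : ℕ → ℕ) (n : ℕ) : Set (XPt τ) :=
  {x | x = root τ n ∨ ∃ i, x = leaf τ n i}

/-- The two-point set `{x_n, x_{n,i}}`. -/
def pairB (τ : ℕ → ℕ) (n : ℕ) (i : Fin (τ n)) : Set (XPt τ) :=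
  {root τ n, leaf τ n i}

/-- The collection of all open balls of `X_τ`: singletons, pairs `{x_n, x_{n,i}}`,
branches `S_n` and the whole space. -/
def balls (τ : ℕ → ℕ) : Set (Set (XPt τ)) :=
  {B | (∃ x, B = {x}) ∨ (∃ n i, B = pairB τ n i) ∨ (∃ n, B = branch τ n) ∨ B = Set.univ}

/-- The ball `B(x, 3/2)` centered at `x`. -/
def cball (τ : ℕ → ℕ) : XPt τ → Set (XPt τ)
  | Sum.inl n => branch τ n
  | Sum.inr ⟨n, i⟩ => pairB τ n i

/-- The weight (measure of the singleton): `μ({x_n}) = d n`,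
`μ({x_{n,i}}) = d n * F n i`. -/
noncomputable def weight (τ : ℕ → ℕ) (d : ℕ → ℝ≥0∞)
    (F : (n : ℕ) → Fin (τ n) → ℝ≥0∞) : XPt τ → ℝ≥0∞
  | Sum.inl n => d n
  | Sum.inr ⟨n, i⟩ => d n * F n i

/-- Measure of a set. -/
noncomputable def mass {τ : ℕ → ℕ} (w : XPt τ → ℝ≥0∞) (s : Set (XPt τ)) : ℝ≥0∞ :=
  ∑' x : s, w x.1

/-- Average `A_s(f)` of `f` over `s`. -/
noncomputable def avg {τ : ℕ → ℕ} (w f : XPt τ → ℝ≥0∞) (s : Set (XPt τ)) : ℝ≥0∞ :=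
  (∑' x : s, f x.1 * w x.1) / mass w s

/-- The centered Hardy–Littlewood maximal operator of `X_τ` (the three balls
centered at `x` are `{x}`, `cball τ x` and the whole space). -/
noncomputable def Mc {τ : ℕ → ℕ} (w f : XPt τ → ℝ≥0∞) (x : XPt τ) : ℝ≥0∞ :=
  avg w f {x} ⊔ avg w f (cball τ x) ⊔ avg w f Set.univ

/-- The non-centered Hardy–Littlewood maximal operator of `X_τ`. -/
noncomputable def Mnc {τ : ℕ → ℕ} (w f : XPt τ → ℝ≥0∞) (x : XPt τ) : ℝ≥0∞ :=
  ⨆ (B : Set (XPt τ)) (_ : B ∈ balls τ) (_ : x ∈ B), avg w f B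

/-- `‖f‖_p^p = ∑_x f(x)^p μ({x})`. -/
noncomputable def lpp {τ : ℕ → ℕ} (w : XPt τ → ℝ≥0∞) (p : ℝ) (f : XPt τ → ℝ≥0∞) : ℝ≥0∞ :=
  ∑' x, f x ^ p * w x

/-- `T` is of strong type `(p,p)` (stated on the level of `p`-th powers). -/
def strongT {τ : ℕ → ℕ} (w : XPt τ → ℝ≥0∞)
    (T : (XPt τ → ℝ≥0∞) → XPt τ → ℝ≥0∞) (p : ℝ) : Prop :=
  ∃ C : ℝ≥0∞, C ≠ ∞ ∧ ∀ f, lpp w p (T f) ≤ C * lpp w p f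

/-- `T` is of weak type `(p,p)` (stated on the level of `p`-th powers). -/
def weakT {τ : ℕ → ℕ} (w : XPt τ → ℝ≥0∞)
    (T : (XPt τ → ℝ≥0∞) → XPt τ → ℝ≥0∞) (p : ℝ) : Prop :=
  ∃ C : ℝ≥0∞, C ≠ ∞ ∧ ∀ f (l : ℝ≥0∞), l ^ p * mass w {x | l < T f x} ≤ C * lpp w p f

/-- `‖g‖_{p,∞}^p`. -/
noncomputable def wnormP {τ : ℕ → ℕ} (w : XPt τ → ℝ≥0∞) (p : ℝ) (g : XPt τ → ℝ≥0∞) : ℝ≥0∞ :=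
  ⨆ l : ℝ≥0∞, l ^ p * mass w {x | l < g x}

/-- The Dirac function `δ_{x_n}`. -/
noncomputable def dirac (τ : ℕ → ℕ) (n : ℕ) : XPt τ → ℝ≥0∞ :=
  fun x => if x = root τ n then 1 else 0

end FirstGen

open FirstGen

/-! Every ball containing `x` is `{x}`, a pair `{x_n, x_{n,i}}` through `x`, the branch of `x`
or the whole space, so `(Mf x)^p` is at most the sum of the `p`-th powers of the four
corresponding averages. The branch and whole-space averages are handled by Jensen's inequality.
A pair average is at most `f(x_n)/(n+2) + f(x_{n,i})`, since `x_n` carries the fraction `1/(n+2)`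
of the pair's mass. At the root the crude bound `f(x_n) + f(x_{n,i})` suffices because
`μ(x_n) ≤ μ(x_{n,i})`; at the `τ_n` leaves the root contributions add up to
`τ_n (n+1)/(n+2)^p · f(x_n)^p μ(x_n)`, and `τ_n (n+1) ≤ (n+2)^p` is exactly the choice of `τ_n`. -/

namespace ENNReal

open MeasureTheory

theorem inner_le_Lp_mul_Lq_tsum {ι : Type*} [Countable ι] (f g : ι → ℝ≥0∞) {p q : ℝ}
    (hpq : p.HolderConjugate q) :
    ∑' i, f i * g i ≤ (∑' i, f i ^ p) ^ (1 / p) * (∑' i, g i ^ q) ^ (1 / q) := by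
  let _ : MeasurableSpace ι := ⊤
  simpa [lintegral_count] using ENNReal.lintegral_mul_le_Lp_mul_Lq Measure.count hpq
    (measurable_of_countable f).aemeasurable (measurable_of_countable g).aemeasurable

theorem rpow_arith_mean_le_arith_mean_rpow_tsum {ι : Type*} [Countable ι] (w z : ι → ℝ≥0∞)
    (hw : ∑' i, w i = 1) {p : ℝ} (hp : 1 ≤ p) :
    (∑' i, w i * z i) ^ p ≤ ∑' i, w i * z i ^ p := by
  obtain rfl | hp1 := hp.eq_or_lt
  · simp
  have hpq := Real.HolderConjugate.conjExponent hp1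
  set q := p.conjExponent
  have hp0 : 0 < p := hpq.pos
  rw [← le_rpow_inv_iff hp0]
  calc ∑' i, w i * z i = ∑' i, (w i ^ p⁻¹ * z i) * w i ^ q⁻¹ := by
        refine tsum_congr fun i => ?_
        rw [mul_right_comm, ← rpow_add_of_nonneg _ _ (inv_nonneg.2 hp0.le)
          (inv_nonneg.2 hpq.symm.pos.le), hpq.inv_add_inv_eq_one, rpow_one]
    _ ≤ (∑' i, (w i ^ p⁻¹ * z i) ^ p) ^ (1 / p) * (∑' i, (w i ^ q⁻¹) ^ q) ^ (1 / q) :=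
        inner_le_Lp_mul_Lq_tsum _ _ hpq
    _ = (∑' i, w i * z i ^ p) ^ p⁻¹ := by
        simp only [mul_rpow_of_nonneg _ _ hp0.le, rpow_inv_rpow hp0.ne',
          rpow_inv_rpow hpq.symm.ne_zero, hw, one_rpow, mul_one, one_div]

end ENNReal

namespace FirstGen

variable {τ : ℕ → ℕ}

lemma root_ne_leaf {n : ℕ} {i : Fin (τ n)} : root τ n ≠ leaf τ n i := Sum.inl_ne_inr

lemma leaf_injective (n : ℕ) : Function.Injective (leaf τ n) := by
  intro i j hij
  simpa [leaf] using hij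

lemma tsum_pairB (g : XPt τ → ℝ≥0∞) (n : ℕ) (i : Fin (τ n)) :
    ∑' x : pairB τ n i, g x = g (root τ n) + g (leaf τ n i) := by
  rw [pairB, ← Finset.coe_pair, Finset.tsum_subtype', Finset.sum_pair root_ne_leaf]

lemma tsum_branch (g : XPt τ → ℝ≥0∞) (n : ℕ) :
    ∑' x : branch τ n, g x = g (root τ n) + ∑ i, g (leaf τ n i) := by
  have h : branch τ n = ↑(insert (root τ n) (Finset.univ.image (leaf τ n))) := by
    ext x
    simp [branch, eq_comm]
  rw [h, Finset.tsum_subtype', Finset.sum_insert (by simpa using fun i => root_ne_leaf.symm),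
    Finset.sum_image fun i _ j _ hij => leaf_injective n hij]

lemma tsum_eq_tsum_tsum_branch (g : XPt τ → ℝ≥0∞) :
    ∑' x, g x = ∑' n, ∑' x : branch τ n, g x := by
  rw [ENNReal.summable.tsum_sum ENNReal.summable, ENNReal.tsum_sigma' fun σ => g (Sum.inr σ),
    ← ENNReal.tsum_add]
  exact tsum_congr fun n => by rw [tsum_branch, tsum_fintype]; rfl

def branchIndex : XPt τ → ℕ := Sum.elim id Sigma.fst

lemma branchIndex_of_mem {x : XPt τ} {n : ℕ} (hx : x ∈ branch τ n) : branchIndex x = n := by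
  obtain rfl | ⟨i, rfl⟩ := hx <;> rfl

noncomputable def pairMax (w f : XPt τ → ℝ≥0∞) : XPt τ → ℝ≥0∞
  | Sum.inl n => ⨆ i, avg w f (pairB τ n i)
  | Sum.inr ⟨n, i⟩ => avg w f (pairB τ n i)

section Maximal

variable (w f : XPt τ → ℝ≥0∞) {p : ℝ}

lemma avg_singleton_le (x : XPt τ) : avg w f {x} ≤ f x := by
  rw [avg, mass, tsum_singleton x fun y => f y * w y, tsum_singleton x w]
  exact ENNReal.div_le_of_le_mul le_rfl

lemma avg_pairB_le_pairMax {x : XPt τ} {n : ℕ} {i : Fin (τ n)} (hx : x ∈ pairB τ n i) :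
    avg w f (pairB τ n i) ≤ pairMax w f x := by
  obtain rfl | rfl := hx
  · exact le_iSup (fun j => avg w f (pairB τ n j)) i
  · exact le_rfl

lemma Mnc_le (x : XPt τ) :
    Mnc w f x ≤ f x ⊔ pairMax w f x ⊔ avg w f (branch τ (branchIndex x)) ⊔ avg w f univ := by
  refine iSup₂_le fun B hB => iSup_le fun hx => ?_
  obtain ⟨y, rfl⟩ | ⟨n, i, rfl⟩ | ⟨n, rfl⟩ | rfl := hB
  · obtain rfl : x = y := hx
    exact le_sup_of_le_left <| le_sup_of_le_left <| le_sup_of_le_left <| avg_singleton_le w f x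
  · exact le_sup_of_le_left <| le_sup_of_le_left <| le_sup_of_le_right <|
      avg_pairB_le_pairMax w f hx
  · rw [← branchIndex_of_mem hx]
    exact le_sup_of_le_left le_sup_right
  · exact le_sup_right

lemma lpp_Mnc_le (hp : 0 ≤ p) :
    lpp w p (Mnc w f) ≤ lpp w p f + ∑' x, pairMax w f x ^ p * w x
      + ∑' x, avg w f (branch τ (branchIndex x)) ^ p * w x + ∑' x, avg w f univ ^ p * w x := by
  have rpow_sup_le (a b : ℝ≥0∞) : (a ⊔ b) ^ p ≤ a ^ p + b ^ p := by
    rw [(ENNReal.monotone_rpow_of_nonneg hp).map_sup]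
    exact sup_le le_self_add le_add_self
  simp only [lpp, ← ENNReal.tsum_add, ← add_mul]
  refine ENNReal.tsum_le_tsum fun x => mul_le_mul_left ?_ _
  refine (ENNReal.rpow_le_rpow (Mnc_le w f x) hp).trans ?_
  grw [rpow_sup_le, rpow_sup_le, rpow_sup_le]

lemma avg_rpow_mul_mass_le (hp : 1 ≤ p) (s : Set (XPt τ)) :
    avg w f s ^ p * mass w s ≤ ∑' x : s, f x ^ p * w x := by
  rw [avg]
  set m := mass w s
  rcases eq_or_ne m 0 with hm0 | hm0
  · simp [hm0]
  rcases eq_or_ne m ∞ with hmt | hmt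
  · simp [hmt, ENNReal.zero_rpow_of_pos (zero_lt_one.trans_le hp)]
  have hv : ∑' x : s, w x * m⁻¹ = 1 := by
    rw [ENNReal.tsum_mul_right, ← mass, ENNReal.mul_inv_cancel hm0 hmt]
  calc ((∑' x : s, f x * w x) / m) ^ p * m = (∑' x : s, w x * m⁻¹ * f x) ^ p * m := by
        simp only [div_eq_mul_inv, ← ENNReal.tsum_mul_right, mul_right_comm, mul_comm (f _)]
    _ ≤ (∑' x : s, w x * m⁻¹ * f x ^ p) * m := by
        gcongr
        exact ENNReal.rpow_arith_mean_le_arith_mean_rpow_tsum _ (fun x : s => f x) hv hp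
    _ = ∑' x : s, f x ^ p * w x := by
        rw [← ENNReal.tsum_mul_right]
        refine tsum_congr fun x => ?_
        rw [mul_right_comm _ m⁻¹, mul_assoc, ENNReal.inv_mul_cancel hm0 hmt, mul_one, mul_comm]

lemma tsum_avg_univ_rpow_mul_le (hp : 1 ≤ p) : ∑' x, avg w f univ ^ p * w x ≤ lpp w p f := by
  simpa only [ENNReal.tsum_mul_left, mass, lpp, tsum_univ fun x => f x ^ p * w x, tsum_univ w]
    using avg_rpow_mul_mass_le w f hp univ

lemma tsum_avg_branch_rpow_mul_le (hp : 1 ≤ p) :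
    ∑' x, avg w f (branch τ (branchIndex x)) ^ p * w x ≤ lpp w p f := by
  rw [lpp, tsum_eq_tsum_tsum_branch, tsum_eq_tsum_tsum_branch]
  refine ENNReal.tsum_le_tsum fun n => ?_
  calc ∑' x : branch τ n, avg w f (branch τ (branchIndex x.1)) ^ p * w x
      = avg w f (branch τ n) ^ p * mass w (branch τ n) := by
        rw [mass, ← ENNReal.tsum_mul_left]
        exact tsum_congr fun x => by rw [branchIndex_of_mem x.2]
    _ ≤ _ := avg_rpow_mul_mass_le w f hp _

lemma avg_pairB_le (n : ℕ) (i : Fin (τ n)) :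
    avg w f (pairB τ n i) ≤
      f (root τ n) * (w (root τ n) / (w (root τ n) + w (leaf τ n i))) + f (leaf τ n i) := by
  rw [avg, mass, tsum_pairB (fun x => f x * w x), tsum_pairB w, ENNReal.add_div, mul_div_assoc]
  gcongr
  exact ENNReal.div_le_of_le_mul (by gcongr; exact le_add_self)

lemma pairMax_root_rpow_mul_le (hp : 1 ≤ p) (n : ℕ)
    (hw : ∀ i, w (root τ n) ≤ w (leaf τ n i)) :
    pairMax w f (root τ n) ^ p * w (root τ n) ≤
      2 ^ (p - 1) * ∑' x : branch τ n, f x ^ p * w x := by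
  have hp0 : 0 < p := zero_lt_one.trans_le hp
  change (ENNReal.orderIsoRpow p hp0 (⨆ i, avg w f (pairB τ n i))) * _ ≤ _
  rw [OrderIso.map_iSup, ENNReal.iSup_mul, tsum_branch (fun x => f x ^ p * w x)]
  refine iSup_le fun i => ?_
  have hθ : w (root τ n) / (w (root τ n) + w (leaf τ n i)) ≤ 1 :=
    ENNReal.div_le_of_le_mul (by rw [one_mul]; exact le_self_add)
  calc (avg w f (pairB τ n i)) ^ p * w (root τ n)
      ≤ (f (root τ n) + f (leaf τ n i)) ^ p * w (root τ n) := by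
        grw [avg_pairB_le, hθ, mul_one]
    _ ≤ 2 ^ (p - 1) * (f (root τ n) ^ p * w (root τ n) + f (leaf τ n i) ^ p * w (root τ n)) := by
        grw [ENNReal.rpow_add_le_mul_rpow_add_rpow _ _ hp, mul_assoc, add_mul]
    _ ≤ 2 ^ (p - 1) * (f (root τ n) ^ p * w (root τ n) + f (leaf τ n i) ^ p * w (leaf τ n i)) := by
        gcongr
        exact hw i
    _ ≤ 2 ^ (p - 1) * (f (root τ n) ^ p * w (root τ n)
          + ∑ j, f (leaf τ n j) ^ p * w (leaf τ n j)) := by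
        gcongr
        exact Finset.single_le_sum (f := fun j => f (leaf τ n j) ^ p * w (leaf τ n j))
          (fun _ _ => zero_le) (Finset.mem_univ i)

lemma sum_pairMax_leaf_rpow_mul_le (hp : 1 ≤ p) (n : ℕ)
    (hw : ∑ i, (w (root τ n) / (w (root τ n) + w (leaf τ n i))) ^ p * w (leaf τ n i)
      ≤ w (root τ n)) :
    ∑ i, pairMax w f (leaf τ n i) ^ p * w (leaf τ n i) ≤
      2 ^ (p - 1) * ∑' x : branch τ n, f x ^ p * w x := by
  have hp0 : 0 ≤ p := zero_le_one.trans hp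
  rw [tsum_branch (fun x => f x ^ p * w x)]
  calc ∑ i, avg w f (pairB τ n i) ^ p * w (leaf τ n i)
      ≤ ∑ i, 2 ^ (p - 1) * (f (root τ n) ^ p *
          ((w (root τ n) / (w (root τ n) + w (leaf τ n i))) ^ p * w (leaf τ n i))
          + f (leaf τ n i) ^ p * w (leaf τ n i)) := by
        refine Finset.sum_le_sum fun i _ => ?_
        grw [avg_pairB_le, ENNReal.rpow_add_le_mul_rpow_add_rpow _ _ hp,
          ENNReal.mul_rpow_of_nonneg _ _ hp0]
        exact le_of_eq (by ring)
    _ ≤ 2 ^ (p - 1) * (f (root τ n) ^ p * w (root τ n)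
          + ∑ i, f (leaf τ n i) ^ p * w (leaf τ n i)) := by
        rw [← Finset.mul_sum, Finset.sum_add_distrib, ← Finset.mul_sum]
        grw [hw]

lemma tsum_pairMax_rpow_mul_le (hp : 1 ≤ p)
    (hroot : ∀ n i, w (root τ n) ≤ w (leaf τ n i))
    (hleaf : ∀ n, ∑ i, (w (root τ n) / (w (root τ n) + w (leaf τ n i))) ^ p * w (leaf τ n i)
      ≤ w (root τ n)) :
    ∑' x, pairMax w f x ^ p * w x ≤ 2 ^ p * lpp w p f := by
  have two_rpow : (2 : ℝ≥0∞) ^ p = 2 ^ (p - 1) + 2 ^ (p - 1) := by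
    conv_lhs => rw [← sub_add_cancel p 1]
    rw [ENNReal.rpow_add _ _ two_ne_zero ENNReal.ofNat_ne_top, ENNReal.rpow_one, mul_two]
  rw [lpp, tsum_eq_tsum_tsum_branch, tsum_eq_tsum_tsum_branch, ← ENNReal.tsum_mul_left]
  refine ENNReal.tsum_le_tsum fun n => ?_
  rw [tsum_branch (fun x => pairMax w f x ^ p * w x), two_rpow, add_mul]
  exact add_le_add (pairMax_root_rpow_mul_le w f hp n (hroot n))
    (sum_pairMax_leaf_rpow_mul_le w f hp n (hleaf n))

end Maximal

section Xhat

variable {d : ℕ → ℝ≥0∞} {F : (n : ℕ) → Fin (τ n) → ℝ≥0∞}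

lemma weight_root_le_weight_leaf (hF : ∀ n i, F n i = n + 1) (n : ℕ) (i : Fin (τ n)) :
    weight τ d F (root τ n) ≤ weight τ d F (leaf τ n i) := by
  change d n ≤ d n * F n i
  rw [hF]
  exact le_mul_of_one_le_right' le_add_self

lemma sum_weight_leaf_le {p : ℝ} (hF : ∀ n i, F n i = n + 1) {n : ℕ} (hd0 : d n ≠ 0)
    (hdt : d n ≠ ∞) (hτ : (τ n : ℝ≥0∞) * (n + 1) ≤ (n + 2) ^ p) :
    ∑ i, (weight τ d F (root τ n) / (weight τ d F (root τ n) + weight τ d F (leaf τ n i))) ^ p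
      * weight τ d F (leaf τ n i) ≤ weight τ d F (root τ n) := by
  change ∑ i, (d n / (d n + d n * F n i)) ^ p * (d n * F n i) ≤ d n
  have hθ : d n / (d n + d n * (n + 1)) = ((n : ℝ≥0∞) + 2)⁻¹ := by
    rw [← mul_one_add, add_comm, add_assoc, one_add_one_eq_two,
      ENNReal.div_eq_inv_mul, ENNReal.mul_inv (.inr (by simp)) (.inl hdt),
      mul_right_comm, ENNReal.inv_mul_cancel hd0 hdt, one_mul]
  simp only [hF, hθ, Finset.sum_const, Finset.card_univ, Fintype.card_fin, nsmul_eq_mul,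
    ENNReal.inv_rpow]
  calc (τ n : ℝ≥0∞) * (((n + 2 : ℝ≥0∞) ^ p)⁻¹ * (d n * (n + 1)))
      = d n * ((τ n * (n + 1)) * ((n + 2 : ℝ≥0∞) ^ p)⁻¹) := by ring
    _ ≤ d n * 1 := by grw [hτ, ENNReal.mul_inv_le_one]
    _ = d n := mul_one _

lemma natCast_floor_mul_le {p : ℝ} (n : ℕ) :
    (⌊((n : ℝ) + 2) ^ p / ((n : ℝ) + 1)⌋₊ : ℝ≥0∞) * (n + 1) ≤ (n + 2) ^ p := by
  have hreal : (⌊((n : ℝ) + 2) ^ p / ((n : ℝ) + 1)⌋₊ : ℝ) * (n + 1) ≤ ((n : ℝ) + 2) ^ p :=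
    (le_div_iff₀ (by positivity)).1 (Nat.floor_le (by positivity))
  have := ENNReal.ofReal_le_ofReal hreal
  rw [← ENNReal.ofReal_rpow_of_pos (by positivity)] at this
  simpa [ENNReal.ofReal_mul, ENNReal.ofReal_add] using this

end Xhat

end FirstGen

-- Branch `n` here is the paper's branch `n + 1`.
theorem Xhat_noncen_strong_general (p0 : ℝ) (hp0 : 1 ≤ p0)
    (τ : ℕ → ℕ) (hτ : ∀ n : ℕ, τ n = ⌊((n : ℝ) + 2) ^ p0 / ((n : ℝ) + 1)⌋₊)
    (d : ℕ → ℝ≥0∞) (hd : ∀ n, 0 < d n ∧ d n ≠ ∞)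
    (F : (n : ℕ) → Fin (τ n) → ℝ≥0∞) (hF : ∀ n i, F n i = (n : ℝ≥0∞) + 1) :
    ∀ f : XPt τ → ℝ≥0∞,
      lpp (weight τ d F) p0 (Mnc (weight τ d F) f)
        ≤ (3 + 2 ^ (p0 + 1)) * lpp (weight τ d F) p0 f := by
  intro f
  set w := weight τ d F
  have hleaf n := sum_weight_leaf_le hF (hd n).1.ne' (hd n).2
    (by rw [hτ n]; exact natCast_floor_mul_le n)
  have two_rpow_le : (2 : ℝ≥0∞) ^ p0 ≤ 2 ^ (p0 + 1) :=
    ENNReal.rpow_le_rpow_of_exponent_le one_le_two (by linarith)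
  calc lpp w p0 (Mnc w f)
      ≤ lpp w p0 f + ∑' x, pairMax w f x ^ p0 * w x
        + ∑' x, avg w f (branch τ (branchIndex x)) ^ p0 * w x
        + ∑' x, avg w f univ ^ p0 * w x := lpp_Mnc_le w f (by linarith)
    _ ≤ lpp w p0 f + 2 ^ (p0 + 1) * lpp w p0 f + lpp w p0 f + lpp w p0 f := by
        grw [tsum_pairMax_rpow_mul_le w f hp0 (weight_root_le_weight_leaf hF) hleaf, two_rpow_le,
          tsum_avg_branch_rpow_mul_le w f hp0, tsum_avg_univ_rpow_mul_le w f hp0]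
    _ = (3 + 2 ^ (p0 + 1)) * lpp w p0 f := by ring

/-- in the first generation space `X̂_{p₀}` (`p₀ ∈ [1,∞)`; branch `n`
here is the paper's branch `n+1`), the non-centered maximal operator is of strong
type `(p₀,p₀)` with `‖Mf‖_{p₀}^{p₀} ≤ (3 + 2^{p₀+1}) ‖f‖_{p₀}^{p₀}`. -/
theorem Xhat_noncen_strong (p0 : ℝ) (hp0 : 1 ≤ p0)
    (τ : ℕ → ℕ) (hτ : ∀ n : ℕ, τ n = ⌊((n : ℝ) + 2) ^ p0 / ((n : ℝ) + 1)⌋₊)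
    (d : ℕ → ℝ≥0∞) (hd : ∀ n, 0 < d n ∧ d n ≠ ∞) (hd1 : d 0 = 1)
    (F : (n : ℕ) → Fin (τ n) → ℝ≥0∞) (hF : ∀ n i, F n i = (n : ℝ≥0∞) + 1)
    (hhalf : ∀ n, mass (weight τ d F) (branch τ (n + 1))
      = mass (weight τ d F) (branch τ n) / 2) :
    ∀ f : XPt τ → ℝ≥0∞,
      lpp (weight τ d F) p0 (Mnc (weight τ d F) f)
        ≤ (3 + 2 ^ (p0 + 1)) * lpp (weight τ d F) p0 f :=
  Xhat_noncen_strong_general p0 hp0 τ hτ d hd F hF
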